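/- Let T be a tree with root at infinity of bounded degree, i.e., sup_{x∈T} #succ(x) < ∞, and let m be a flow measure on T. Then there exists a sequence (m_j) of uniformly rational flow measures on T such that m_j(x) → m(x) as j → ∞ for every x ∈ T. -/

import Mathlib

open scoped ENNReal NNReal
open MeasureTheory Filter

namespace Flow

/-- A tree with root at infinity: a set with a predecessor map, no cycles,
joint ancestors, and finitely many successors at each vertex. -/
structure RootedTree (T : Type*) where
  pred : T → T
  no_cycle : ∀ (x : T) (k : ℕ), 1 ≤ k → pred^[k] x ≠ x
  connected : ∀ x y : T, ∃ k l : ℕ, pred^[k] x = pred^[l] y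
  succ_finite : ∀ x : T, {y : T | pred y = x}.Finite

variable {T T₁ T₂ : Type*}

/-- The graph distance on a tree with root at infinity. -/
noncomputable def RootedTree.dist (t : RootedTree T) (x y : T) : ℕ :=
  sInf {n : ℕ | ∃ k l : ℕ, k + l = n ∧ t.pred^[k] x = t.pred^[l] y}

/-- The partial order: `x ≤ y` iff `y` is an ancestor of `x`. -/
def RootedTree.le (t : RootedTree T) (x y : T) : Prop :=
  ∃ k : ℕ, t.pred^[k] x = y

def RootedTree.lt (t : RootedTree T) (x y : T) : Prop :=
  t.le x y ∧ x ≠ y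

/-- A flow measure on a tree with root at infinity. -/
structure IsFlowMeasure (t : RootedTree T) (m : T → ℝ) : Prop where
  pos : ∀ x, 0 < m x
  flow : ∀ x, m x = ∑' y : {y : T // t.pred y = x}, m (y : T)

/-- A level function on a tree with root at infinity. -/
def IsLevel (t : RootedTree T) (lev : T → ℤ) : Prop :=
  ∀ x : T, lev (t.pred x) = lev x + 1

/-- A homogeneous tree where every vertex has exactly `q` successors. -/
def IsHomogeneous (t : RootedTree T) (q : ℕ) : Prop :=
  ∀ x : T, {y : T | t.pred y = x}.ncard = q

/-- The canonical flow measure `q ^ ℓ(x)` on the homogeneous tree of index `q`. -/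
noncomputable def canonicalFlow (q : ℕ) (lev : T → ℤ) : T → ℝ :=
  fun x => (q : ℝ) ^ (lev x)

/-- A `q`-uniformly rational flow measure. -/
def UniformlyRational (t : RootedTree T) (m : T → ℝ) (q : ℕ) : Prop :=
  ∀ x : T, ∃ n : ℕ, 0 < n ∧ (q : ℝ) * m x = (n : ℝ) * m (t.pred x)

/-- The `L^p(m)` norm of a function on a flow tree, `p ∈ [1,∞]`. -/
noncomputable def lpNorm (m : T → ℝ) (p : ℝ≥0∞) (f : T → ℂ) : ℝ≥0∞ :=
  if p = ∞ then ⨆ x : T, (‖f x‖₊ : ℝ≥0∞)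
  else (∑' x : T, (‖f x‖₊ : ℝ≥0∞) ^ p.toReal * ENNReal.ofReal (m x)) ^ (1 / p.toReal)

/-- The measure of a subset of a flow tree. -/
noncomputable def setMass (m : T → ℝ) (S : Set T) : ℝ≥0∞ :=
  ∑' x : S, ENNReal.ofReal (m (x : T))

/-- Boundedness of an operator on `L^p(m)`. -/
def BoundedOnLp (m : T → ℝ) (p : ℝ≥0∞) (O : (T → ℂ) → (T → ℂ)) : Prop :=
  ∃ C : ℝ, 0 < C ∧ ∀ f : T → ℂ, lpNorm m p f < ∞ →
    lpNorm m p (O f) ≤ ENNReal.ofReal C * lpNorm m p f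

/-- Boundedness on `L^p(m)` of an operator defined on `L²(m) ∩ L^p(m)`. -/
def BoundedOnLp₂ (m : T → ℝ) (p : ℝ≥0∞) (O : (T → ℂ) → (T → ℂ)) : Prop :=
  ∃ C : ℝ, 0 < C ∧ ∀ f : T → ℂ, lpNorm m 2 f < ∞ → lpNorm m p f < ∞ →
    lpNorm m p (O f) ≤ ENNReal.ofReal C * lpNorm m p f

/-- The `L^p → L^p` operator norm (supremum over the unit ball). -/
noncomputable def opNormLp (m : T → ℝ) (p : ℝ≥0∞) (O : (T → ℂ) → (T → ℂ)) : ℝ≥0∞ :=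
  ⨆ f : {f : T → ℂ // lpNorm m p f ≤ 1}, lpNorm m p (O f.1)

/-- The `L^p → L^p` operator norm of an operator defined on `L²(m) ∩ L^p(m)`. -/
noncomputable def opNormLp₂ (m : T → ℝ) (p : ℝ≥0∞) (O : (T → ℂ) → (T → ℂ)) : ℝ≥0∞ :=
  ⨆ f : {f : T → ℂ // lpNorm m 2 f < ∞ ∧ lpNorm m p f ≤ 1}, lpNorm m p (O f.1)

/-- The flow measure `m` is locally doubling. -/
def LocallyDoubling (t : RootedTree T) (m : T → ℝ) : Prop :=
  ∀ R : ℝ, 0 < R → ∃ D : ℝ, 0 < D ∧ ∀ (x : T) (r : ℝ), 0 < r → r ≤ R →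
    setMass m {y : T | (t.dist x y : ℝ) ≤ 2 * r} ≤
      ENNReal.ofReal D * setMass m {y : T | (t.dist x y : ℝ) ≤ r}

/-- The shift operator `Σ f (x) = f(𝔭(x))`. -/
noncomputable def shiftOp (t : RootedTree T) (f : T → ℂ) : T → ℂ :=
  fun x => f (t.pred x)

/-- The adjoint shift `Σ* f (x) = m(x)⁻¹ Σ_{y ∈ succ(x)} f(y) m(y)`. -/
noncomputable def shiftStarOp (t : RootedTree T) (m : T → ℝ) (f : T → ℂ) : T → ℂ :=
  fun x => ((m x : ℂ))⁻¹ * ∑' y : {y : T // t.pred y = x}, f (y : T) * ((m (y : T) : ℂ))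

/-- The flow gradient `∇ = I - Σ`. -/
noncomputable def gradOp (t : RootedTree T) (f : T → ℂ) : T → ℂ :=
  fun x => f x - f (t.pred x)

/-- The adjoint flow gradient `∇* = I - Σ*`. -/
noncomputable def gradStarOp (t : RootedTree T) (m : T → ℝ) (f : T → ℂ) : T → ℂ :=
  fun x => f x - shiftStarOp t m f x

/-- The flow Laplacian `𝓛 = I - (Σ + Σ*)/2`. -/
noncomputable def lapOp (t : RootedTree T) (m : T → ℝ) (f : T → ℂ) : T → ℂ :=
  fun x => f x - (shiftOp t f x + shiftStarOp t m f x) / 2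

/-- The heat semigroup `e^{-s𝓛}`, given by the exponential power series. -/
noncomputable def heatOp (t : RootedTree T) (m : T → ℝ) (s : ℝ) (f : T → ℂ) : T → ℂ :=
  fun x => ∑' k : ℕ, ((-(s : ℂ)) ^ k / (Nat.factorial k : ℂ)) * ((lapOp t m)^[k] f) x

/-- The integral kernel of an operator: `K_O(x,y) = O(𝟙_{y})(x) / m(y)`. -/
noncomputable def opKernel (m : T → ℝ) (O : (T → ℂ) → (T → ℂ)) (x y : T) : ℂ :=
  O (Set.indicator {y} fun _ => (1 : ℂ)) x / (m y : ℂ)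

/-- The (formal) adjoint of an operator, given by the conjugate-transpose kernel. -/
noncomputable def adjointOp (m : T → ℝ) (O : (T → ℂ) → (T → ℂ)) (f : T → ℂ) : T → ℂ :=
  fun x => ∑' y : T, (starRingEnd ℂ) (opKernel m O y x) * f y * ((m y : ℂ))

/-- A polynomial applied to an operator. -/
noncomputable def polyApply (L : (T → ℂ) → (T → ℂ)) (P : Polynomial ℂ) (f : T → ℂ) : T → ℂ :=
  fun x => ∑ i ∈ Finset.range (P.natDegree + 1), P.coeff i * (L^[i] f) x

/-- `B` is the continuous functional calculus `F(L)` of the self-adjoint operator `L`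
(whose spectrum is contained in `[0,2]`): `B` is approximated on `L²(m)` by polynomials
in `L`, with operator-norm error controlled by the sup-norm error on `[0,2]`. -/
def IsCfcOf (m : T → ℝ) (L : (T → ℂ) → (T → ℂ)) (F : ℝ → ℂ)
    (B : (T → ℂ) → (T → ℂ)) : Prop :=
  ∀ ε : ℝ, 0 < ε → ∃ P : Polynomial ℂ,
    (∀ lam : ℝ, lam ∈ Set.Icc (0 : ℝ) 2 → ‖F lam - P.eval (lam : ℂ)‖ ≤ ε) ∧
    ∀ f : T → ℂ, lpNorm m 2 f < ∞ →
      lpNorm m 2 (fun x => B f x - polyApply L P f x) ≤ ENNReal.ofReal ε * lpNorm m 2 f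

/-- `Φ` is the Borel functional calculus of the self-adjoint operator `L` with spectrum
in `[0,2]`: it agrees with the continuous functional calculus on continuous functions and
satisfies dominated convergence (bounded pointwise convergence on `[0,2]` implies strong
convergence on `L²(m)`). These properties determine `Φ F` uniquely on `L²(m)` for every
bounded Borel `F`. -/
structure IsBorelFC (m : T → ℝ) (L : (T → ℂ) → (T → ℂ))
    (Φ : (ℝ → ℂ) → (T → ℂ) → (T → ℂ)) : Prop where
  cfc_agree : ∀ F : ℝ → ℂ, ContinuousOn F (Set.Icc 0 2) → IsCfcOf m L F (Φ F)
  dominated : ∀ (Fs : ℕ → ℝ → ℂ) (F : ℝ → ℂ) (C : ℝ),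
    (∀ n, Measurable (Fs n)) → Measurable F →
    (∀ n, ∀ lam ∈ Set.Icc (0 : ℝ) 2, ‖Fs n lam‖ ≤ C) →
    (∀ lam ∈ Set.Icc (0 : ℝ) 2, Tendsto (fun n => Fs n lam) atTop (nhds (F lam))) →
    ∀ f : T → ℂ, lpNorm m 2 f < ∞ →
      Tendsto (fun n => lpNorm m 2 (fun x => Φ (Fs n) f x - Φ F f x)) atTop (nhds 0)

/-- The truncated Riesz transform `∇ F_N(𝓛)`, where
`F_N(s) = π^{-1/2} ∫₀^N e^{-ts} t^{-1/2} dt`. -/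
noncomputable def rieszApprox (t : RootedTree T) (m : T → ℝ) (N : ℕ) (f : T → ℂ) : T → ℂ :=
  fun x => (Real.sqrt Real.pi)⁻¹ •
    ∫ u in Set.Ioc (0 : ℝ) (N : ℝ), (Real.sqrt u)⁻¹ • gradOp t (heatOp t m u f) x

/-- `g = R f`, where the Riesz transform `R = ∇ 𝓛^{-1/2}` is the limit of the truncated
Riesz transforms `∇ F_N(𝓛)` in the strong operator topology of `L²(m)`. -/
def IsRieszOf (t : RootedTree T) (m : T → ℝ) (f g : T → ℂ) : Prop :=
  Tendsto (fun N : ℕ => lpNorm m 2 (fun x => rieszApprox t m N f x - g x)) atTop (nhds 0)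

/-- The integral kernel of the Riesz transform:
`K_R(x,y) = π^{-1/2} ∫₀^∞ K_{∇ e^{-u𝓛}}(x,y) u^{-1/2} du`. -/
noncomputable def rieszKernel (t : RootedTree T) (m : T → ℝ) (x y : T) : ℂ :=
  (Real.sqrt Real.pi)⁻¹ •
    ∫ u in Set.Ioi (0 : ℝ),
      (Real.sqrt u)⁻¹ • opKernel m (fun f => gradOp t (heatOp t m u f)) x y

/-- The convolution kernel `k̃_ℤ(n) = (2√2/π) n/(n² - 1/4)` of the skew-symmetric part of
the discrete Hilbert transform. -/
noncomputable def ktZ (n : ℤ) : ℂ :=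
  ((2 * Real.sqrt 2 / Real.pi : ℝ) : ℂ) * (n : ℂ) / ((n : ℂ) ^ 2 - 1 / 4)

/-- `lam` belongs to the resolvent set of the flow Laplacian on `L^p(m)`:
`lam - 𝓛` has a bounded two-sided inverse on `L^p(m)`. -/
def InResolvent (t : RootedTree T) (m : T → ℝ) (p : ℝ≥0∞) (lam : ℂ) : Prop :=
  ∃ B : (T → ℂ) → (T → ℂ), BoundedOnLp m p B ∧
    (∀ f : T → ℂ, lpNorm m p f < ∞ →
      B (fun x => lam * f x - lapOp t m f x) = f) ∧
    (∀ f : T → ℂ, lpNorm m p f < ∞ →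
      (fun x => lam * B f x - lapOp t m (B f) x) = f)

/-- A submersion between trees with root at infinity. -/
structure IsSubmersion (t₁ : RootedTree T₁) (t₂ : RootedTree T₂) (π : T₁ → T₂) : Prop where
  map_pred : ∀ x : T₁, π (t₁.pred x) = t₂.pred (π x)
  map_succ : ∀ x : T₁, π '' {y : T₁ | t₁.pred y = x} = {z : T₂ | t₂.pred z = π x}

/-- `π`-compatibility of the flow measures `m₁`, `m₂`:
`m₂(π x)/m₂(𝔭(π x)) = m₁(π⁻¹{π x} ∩ succ(𝔭 x))/m₁(𝔭 x)`. -/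
def FlowCompatible (t₁ : RootedTree T₁) (t₂ : RootedTree T₂) (π : T₁ → T₂)
    (m₁ : T₁ → ℝ) (m₂ : T₂ → ℝ) : Prop :=
  ∀ x : T₁,
    m₂ (π x) / m₂ (t₂.pred (π x)) =
      (∑' y : {y : T₁ // π y = π x ∧ t₁.pred y = t₁.pred x}, m₁ (y : T₁)) / m₁ (t₁.pred x)

/-- `O'` witnesses `π`-compatibility of `O`: `O Φ_π = Φ_π O'` and `O* Φ_π = Φ_π O'*`
on `L^∞(m₂)`, where `Φ_π f = f ∘ π` is the lifting operator. -/
def CompatiblePair (t₁ : RootedTree T₁) (t₂ : RootedTree T₂) (π : T₁ → T₂)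
    (m₁ : T₁ → ℝ) (m₂ : T₂ → ℝ)
    (O : (T₁ → ℂ) → (T₁ → ℂ)) (O' : (T₂ → ℂ) → (T₂ → ℂ)) : Prop :=
  (∀ f : T₂ → ℂ, lpNorm m₂ ∞ f < ∞ → O (f ∘ π) = (O' f) ∘ π) ∧
  (∀ f : T₂ → ℂ, lpNorm m₂ ∞ f < ∞ →
    adjointOp m₁ O (f ∘ π) = (adjointOp m₂ O' f) ∘ π)

/-- The squared Sobolev norm `∫ (1+ξ²)^s |G(ξ)|² dξ`, applied to the Fourier transform `G`
of the function under consideration. -/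
noncomputable def sobolevWeight (s : ℝ) (G : ℝ → ℂ) : ℝ≥0∞ :=
  ∫⁻ ξ : ℝ, ENNReal.ofReal ((1 + ξ ^ 2) ^ s) * (‖G ξ‖₊ : ℝ≥0∞) ^ 2

/-- The Sobolev norm `(∫ (1+ξ²)^s |G(ξ)|² dξ)^{1/2}`. -/
noncomputable def sobolevNorm (s : ℝ) (G : ℝ → ℂ) : ℝ≥0∞ :=
  sobolevWeight s G ^ (1 / 2 : ℝ)

/-- `G` is the (distributional) Fourier transform of `F`, characterised by duality
against Schwartz functions. -/
def FourierCoupled (F G : ℝ → ℂ) : Prop :=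
  ∀ φ : SchwartzMap ℝ ℂ,
    (∫ x : ℝ, F x * FourierTransform.fourier (fun y : ℝ => (φ y : ℂ)) x) = ∫ ξ : ℝ, G ξ * φ ξ

/-- The coefficients `g_F(n) = -(i/π) ∫_{-π}^{π} sin θ · F(1-cos θ) e^{inθ} dθ`,
i.e. `∇̃_ℤ k_{F(Δ_ℤ)}(n)` when `F` is bounded Borel on `[0,2]`. -/
noncomputable def gCoef (F : ℝ → ℂ) (n : ℤ) : ℂ :=
  (-(Complex.I / (Real.pi : ℂ))) *
    ∫ θ in Set.Ioc (-Real.pi) Real.pi,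
      ((Real.sin θ : ℂ)) * F (1 - Real.cos θ) * Complex.exp ((n : ℂ) * (θ : ℂ) * Complex.I)

lemma predZ_iter (k : ℕ) (n : ℤ) : (fun n : ℤ => n + 1)^[k] n = n + k := by
  induction k generalizing n with
  | zero => simp
  | succ k ih =>
      rw [Function.iterate_succ_apply, ih]
      push_cast
      ring

/-- `ℤ` as a tree with root at infinity (`𝔭(n) = n+1`); together with the flow measure
`mZ ≡ 1` this is the homogeneous flow tree `T₁`, whose flow Laplacian is the discrete
Laplacian `Δ_ℤ`. -/
noncomputable def treeZ : RootedTree ℤ where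
  pred n := n + 1
  no_cycle x k hk := by rw [predZ_iter]; omega
  connected x y := ⟨(y - x).toNat, (x - y).toNat, by rw [predZ_iter, predZ_iter]; omega⟩
  succ_finite x := (Set.finite_singleton (x - 1)).subset (by
    intro y hy
    simp only [Set.mem_setOf_eq] at hy
    simp only [Set.mem_singleton_iff]
    omega)

/-- The counting flow measure on `ℤ`. -/
def mZ : ℤ → ℝ := fun _ => 1

/-- The convolution kernel of a translation-invariant operator on `ℤ`: `k_B = B δ₀`. -/
noncomputable def kZker (B : (ℤ → ℂ) → (ℤ → ℂ)) (n : ℤ) : ℂ :=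
  B (Set.indicator {0} fun _ => (1 : ℂ)) n

end Flow

/-!
The ratios `ρ y = m y / m (𝔭 y)` form a probability vector on each `succ x`, and `m` is
recovered from `ρ` and its value at a single vertex `o` by multiplying ratios along the paths
from `x` and from `o` to their meeting point. Rounding each probability vector to multiples
of `1/q` — all entries up except one of size at least `1/#succ x`, which absorbs the
rounding errors — keeps it positive and summing to `1` as soon as `q ≥ (#succ x)²`; bounded
degree makes one `q` work at every vertex. The measures rebuilt from the rounded ratios are
`q`-uniformly rational and converge to `m` as `q → ∞`.
-/

open Finset Topology

theorem exists_nat_weights_approx {ι : Type*} (s : Finset ι) (ρ : ι → ℝ)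
    (hpos : ∀ i ∈ s, 0 < ρ i) (hsum : ∑ i ∈ s, ρ i = 1) {q : ℕ} (hq : #s ^ 2 ≤ q) :
    ∃ w : ι → ℕ, (∀ i ∈ s, 0 < w i) ∧ ∑ i ∈ s, w i = q ∧
      ∀ i ∈ s, |(w i : ℝ) - q * ρ i| ≤ #s := by
  classical
  have hs : s.Nonempty := nonempty_of_sum_ne_zero (by rw [hsum]; exact one_ne_zero)
  have hcard : (0 : ℝ) < #s := by exact_mod_cast hs.card_pos
  obtain ⟨i₀, hi₀, hρi₀⟩ : ∃ i ∈ s, (#s : ℝ)⁻¹ ≤ ρ i :=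
    exists_le_of_sum_le hs (by simp [hsum, hcard.ne'])
  set c : ι → ℕ := fun i => ⌈(q : ℝ) * ρ i⌉₊
  set C := ∑ i ∈ s.erase i₀, c i
  have hc_lb : ∀ i, (q : ℝ) * ρ i ≤ c i := fun i => Nat.le_ceil _
  have hc_ub : ∀ i ∈ s, (c i : ℝ) < q * ρ i + 1 := fun i hi =>
    Nat.ceil_lt_add_one (mul_nonneg q.cast_nonneg (hpos i hi).le)
  have hρ_erase : ∑ i ∈ s.erase i₀, ρ i = 1 - ρ i₀ := by
    rw [← hsum, ← sum_erase_add s ρ hi₀, add_sub_cancel_right]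
  have hC_lb : (q : ℝ) * (1 - ρ i₀) ≤ C := by
    rw [← hρ_erase, mul_sum, Nat.cast_sum]
    exact sum_le_sum fun i _ => hc_lb i
  have hC_ub : (C : ℝ) ≤ q * (1 - ρ i₀) + (#s - 1) := by
    have h := sum_le_sum (s := s.erase i₀) fun i hi => (hc_ub i (mem_of_mem_erase hi)).le
    rw [sum_add_distrib, ← mul_sum, hρ_erase, sum_const, card_erase_of_mem hi₀,
      nsmul_one, Nat.cast_sub hs.card_pos] at h
    rw [Nat.cast_sum]
    simpa using h
  have hqρ : (#s : ℝ) ≤ q * ρ i₀ := by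
    have hq' : (#s : ℝ) ^ 2 ≤ q := by exact_mod_cast hq
    calc (#s : ℝ) = #s ^ 2 * (#s : ℝ)⁻¹ := by field_simp
      _ ≤ q * ρ i₀ := by gcongr
  have hCq : C < q := by
    have : (C : ℝ) < q := by linarith
    exact_mod_cast this
  refine ⟨Function.update c i₀ (q - C), fun i hi => ?_, ?_, fun i hi => ?_⟩
  · rcases eq_or_ne i i₀ with rfl | hne
    · simpa using hCq
    · rw [Function.update_of_ne hne]
      exact Nat.ceil_pos.mpr (mul_pos (by linarith) (hpos i hi))
  · rw [sum_update_of_mem hi₀, sdiff_singleton_eq_erase]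
    omega
  · rcases eq_or_ne i i₀ with rfl | hne
    · rw [Function.update_self, Nat.cast_sub hCq.le, abs_le]
      constructor <;> linarith
    · rw [Function.update_of_ne hne, abs_le]
      have := hc_ub i hi
      have : (1 : ℝ) ≤ #s := by exact_mod_cast hs.card_pos
      constructor <;> linarith [hc_lb i]

namespace Flow.RootedTree

variable {T : Type*} (t : RootedTree T)

noncomputable def succFinset (x : T) : Finset T := (t.succ_finite x).toFinset

@[simp] lemma mem_succFinset {x y : T} : y ∈ t.succFinset x ↔ t.pred y = x := by
  simp [succFinset]

lemma card_succFinset (x : T) : #(t.succFinset x) = {y : T | t.pred y = x}.ncard :=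
  (Set.ncard_eq_toFinset_card _ (t.succ_finite x)).symm

lemma tsum_succ_eq_sum {α : Type*} [AddCommMonoid α] [TopologicalSpace α] (f : T → α) (x : T) :
    ∑' y : {y : T // t.pred y = x}, f y = ∑ y ∈ t.succFinset x, f y := by
  rw [← Finset.tsum_subtype]
  exact tsum_congr_set_coe f (Set.ext fun _ => t.mem_succFinset.symm)

lemma iterate_pred_injective (x : T) : Function.Injective fun k => t.pred^[k] x := by
  intro a b hab
  wlog hle : a ≤ b generalizing a b
  · exact (this hab.symm (by omega)).symm
  by_contra hne
  refine t.no_cycle (t.pred^[a] x) (b - a) (by omega) ?_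
  rw [← Function.iterate_add_apply, Nat.sub_add_cancel hle]
  exact hab.symm

section Field

variable {K : Type*} [Field K]

def pathProd (g : T → K) (x : T) (k : ℕ) : K := ∏ i ∈ range k, g (t.pred^[i] x)

lemma pathProd_add (g : T → K) (x : T) (k d : ℕ) :
    t.pathProd g x (k + d) = t.pathProd g x k * t.pathProd g (t.pred^[k] x) d := by
  simp only [pathProd, prod_range_add, ← Function.iterate_add_apply, add_comm]

lemma pathProd_one (g : T → K) (x : T) : t.pathProd g x 1 = g x := by
  simp [pathProd]

lemma pathProd_ne_zero {g : T → K} (hg : ∀ x, g x ≠ 0) (x : T) (k : ℕ) : t.pathProd g x k ≠ 0 :=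
  prod_ne_zero_iff.mpr fun _ _ => hg _

lemma eq_pathProd_mul {h g : T → K} (hh : ∀ x, h x = g x * h (t.pred x)) (x : T) (k : ℕ) :
    h x = t.pathProd g x k * h (t.pred^[k] x) := by
  induction k with
  | zero => simp [pathProd]
  | succ k ih =>
    rw [ih, pathProd_add, pathProd_one, mul_assoc, Function.iterate_succ_apply', ← hh]

/-- The product of `g` along the path from `x` to its meeting point with `o`, divided by the
same product from `o`: the solution of `h x = g x * h (𝔭 x)` normalised by `h o = 1`. -/
noncomputable def ratioProduct (o : T) (g : T → K) (x : T) : K :=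
  t.pathProd g x (t.connected x o).choose / t.pathProd g o (t.connected x o).choose_spec.choose

lemma pathProd_div_pathProd_eq {g : T → K} (hg : ∀ x, g x ≠ 0) {o x : T} {k l k' l' : ℕ}
    (h : t.pred^[k] x = t.pred^[l] o) (h' : t.pred^[k'] x = t.pred^[l'] o) :
    t.pathProd g x k / t.pathProd g o l = t.pathProd g x k' / t.pathProd g o l' := by
  wlog hle : k ≤ k' generalizing k l k' l'
  · exact (this h' h (by omega)).symm
  obtain ⟨d, rfl⟩ := Nat.exists_eq_add_of_le hle
  have hl' : l' = l + d := t.iterate_pred_injective o <| by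
    simp only [← h', add_comm l d, add_comm k d, Function.iterate_add_apply, h]
  rw [hl', pathProd_add, pathProd_add, h, mul_div_mul_right _ _ (t.pathProd_ne_zero hg _ _)]

lemma ratioProduct_eq {g : T → K} (hg : ∀ x, g x ≠ 0) {o x : T} {k l : ℕ}
    (h : t.pred^[k] x = t.pred^[l] o) :
    t.ratioProduct o g x = t.pathProd g x k / t.pathProd g o l :=
  t.pathProd_div_pathProd_eq hg (t.connected x o).choose_spec.choose_spec h

lemma ratioProduct_eq_mul_pred {g : T → K} (hg : ∀ x, g x ≠ 0) (o x : T) :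
    t.ratioProduct o g x = g x * t.ratioProduct o g (t.pred x) := by
  obtain ⟨k, l, h⟩ := t.connected (t.pred x) o
  rw [t.ratioProduct_eq hg h, t.ratioProduct_eq hg (k := 1 + k) (l := l)
    (by rwa [add_comm, Function.iterate_succ_apply]), pathProd_add, pathProd_one, mul_div_assoc]
  rfl

lemma eq_mul_ratioProduct {h g : T → K} (hh : ∀ x, h x = g x * h (t.pred x)) (hg : ∀ x, g x ≠ 0)
    (o x : T) : h x = h o * t.ratioProduct o g x := by
  obtain ⟨k, l, hkl⟩ := t.connected x o
  rw [t.ratioProduct_eq hg hkl, t.eq_pathProd_mul hh x k, t.eq_pathProd_mul hh o l, hkl]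
  field_simp [t.pathProd_ne_zero hg]

lemma tendsto_ratioProduct [TopologicalSpace K] [ContinuousInv₀ K] [ContinuousMul K]
    {gs : ℕ → T → K} {g : T → K} (hg : ∀ x, g x ≠ 0)
    (hgs : ∀ y, Tendsto (fun j => gs j y) atTop (𝓝 (g y))) (o x : T) :
    Tendsto (fun j => t.ratioProduct o (gs j) x) atTop (𝓝 (t.ratioProduct o g x)) :=
  (tendsto_finsetProd _ fun _ _ => hgs _).div (tendsto_finsetProd _ fun _ _ => hgs _)
    (t.pathProd_ne_zero hg _ _)

lemma ratioProduct_pos [LinearOrder K] [IsStrictOrderedRing K] {g : T → K} (hg : ∀ x, 0 < g x)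
    (o x : T) : 0 < t.ratioProduct o g x :=
  div_pos (prod_pos fun _ _ => hg _) (prod_pos fun _ _ => hg _)

end Field

theorem exists_nat_ratios_tendsto {Q : ℕ} (hQ : ∀ x, #(t.succFinset x) ≤ Q)
    {ρ : T → ℝ} (hpos : ∀ y, 0 < ρ y) (hsum : ∀ x, ∑ y ∈ t.succFinset x, ρ y = 1) :
    ∃ (q : ℕ → ℕ) (w : ℕ → T → ℕ), (∀ j, 0 < q j) ∧ (∀ j y, 0 < w j y) ∧
      (∀ j x, ∑ y ∈ t.succFinset x, w j y = q j) ∧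
      ∀ y, Tendsto (fun j => (w j y : ℝ) / q j) atTop (𝓝 (ρ y)) := by
  have hq : ∀ j x, #(t.succFinset x) ^ 2 ≤ Q ^ 2 + j + 1 := fun j x =>
    (Nat.pow_le_pow_left (hQ x) 2).trans (by omega)
  choose w hw_pos hw_sum hw_approx using fun j x =>
    exists_nat_weights_approx (t.succFinset x) ρ (fun y _ => hpos y) (hsum x) (hq j x)
  have hw_sum' : ∀ j x, ∑ y ∈ t.succFinset x, w j (t.pred y) y = Q ^ 2 + j + 1 := fun j x =>
    (sum_congr rfl fun y hy => by rw [t.mem_succFinset.mp hy]).trans (hw_sum j x)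
  set q : ℕ → ℕ := fun j => Q ^ 2 + j + 1
  refine ⟨q, fun j y => w j (t.pred y) y, fun j => Nat.succ_pos _,
    fun j y => hw_pos j _ y (by simp), hw_sum', fun y => ?_⟩
  have hq_top : Tendsto (fun j => (q j : ℝ)) atTop atTop :=
    tendsto_natCast_atTop_atTop.comp
      (tendsto_atTop_mono (fun j => (Nat.le_add_left j _).trans (Nat.le_succ _)) tendsto_id)
  have herr : ∀ j, ‖(w j (t.pred y) y : ℝ) / q j - ρ y‖ ≤ #(t.succFinset (t.pred y)) / q j := by
    intro j
    have hqj : (0 : ℝ) < q j := by positivity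
    rw [Real.norm_eq_abs, show (w j (t.pred y) y : ℝ) / q j - ρ y
      = (w j (t.pred y) y - q j * ρ y) / q j by field_simp, abs_div, abs_of_pos hqj]
    exact div_le_div_of_nonneg_right (hw_approx j _ y (by simp)) hqj.le
  exact tendsto_sub_nhds_zero_iff.mp (squeeze_zero_norm herr (tendsto_const_nhds.div_atTop hq_top))

end Flow.RootedTree

namespace Flow

variable {T : Type*} {t : RootedTree T} {m : T → ℝ}

noncomputable def predRatio (t : RootedTree T) (m : T → ℝ) (y : T) : ℝ := m y / m (t.pred y)

lemma IsFlowMeasure.predRatio_pos (hm : IsFlowMeasure t m) (y : T) : 0 < predRatio t m y :=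
  div_pos (hm.pos y) (hm.pos _)

lemma IsFlowMeasure.sum_predRatio (hm : IsFlowMeasure t m) (x : T) :
    ∑ y ∈ t.succFinset x, predRatio t m y = 1 := by
  have hpred : ∀ y ∈ t.succFinset x, predRatio t m y = m y / m x := fun y hy => by
    rw [predRatio, t.mem_succFinset.mp hy]
  rw [sum_congr rfl hpred, ← sum_div, ← t.tsum_succ_eq_sum, ← hm.flow, div_self (hm.pos x).ne']

lemma IsFlowMeasure.eq_mul_ratioProduct (hm : IsFlowMeasure t m) (o x : T) :
    m x = m o * t.ratioProduct o (predRatio t m) x :=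
  t.eq_mul_ratioProduct (fun _ => (div_mul_cancel₀ _ (hm.pos _).ne').symm)
    (fun y => (hm.predRatio_pos y).ne') o x

lemma isFlowMeasure_of_eq_mul {h g : T → ℝ} (hpos : ∀ x, 0 < h x)
    (hh : ∀ x, h x = g x * h (t.pred x)) (hg : ∀ x, ∑ y ∈ t.succFinset x, g y = 1) :
    IsFlowMeasure t h where
  pos := hpos
  flow x := by
    have hsucc : ∀ y ∈ t.succFinset x, h y = g y * h x := fun y hy => by
      rw [hh y, t.mem_succFinset.mp hy]
    rw [t.tsum_succ_eq_sum, sum_congr rfl hsucc, ← sum_mul, hg, one_mul]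

end Flow

/-- On a tree with root at infinity of bounded degree, every flow
measure is the pointwise limit of a sequence of uniformly rational flow measures. -/
theorem uniformly_rational_approximation {T : Type*} [Nonempty T]
    (t : Flow.RootedTree T)
    (hdeg : ∃ Q : ℕ, ∀ x : T, {y : T | t.pred y = x}.ncard ≤ Q)
    (m : T → ℝ) (hm : Flow.IsFlowMeasure t m) :
    ∃ ms : ℕ → T → ℝ,
      (∀ j : ℕ, Flow.IsFlowMeasure t (ms j) ∧
        ∃ q : ℕ, 0 < q ∧ Flow.UniformlyRational t (ms j) q) ∧
      ∀ x : T, Filter.Tendsto (fun j => ms j x) Filter.atTop (nhds (m x)) := by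
  obtain ⟨Q, hQ⟩ := hdeg
  obtain ⟨o⟩ := ‹Nonempty T›
  obtain ⟨q, w, hq, hw, hw_sum, hw_lim⟩ :=
    t.exists_nat_ratios_tendsto (fun x => (t.card_succFinset x).trans_le (hQ x))
      hm.predRatio_pos hm.sum_predRatio
  set r : ℕ → T → ℝ := fun j y => (w j y : ℝ) / q j
  have hr_pos : ∀ j y, 0 < r j y := fun j y =>
    div_pos (by exact_mod_cast hw j y) (by exact_mod_cast hq j)
  have hr_sum : ∀ j x, ∑ y ∈ t.succFinset x, r j y = 1 := fun j x => by
    rw [← sum_div, ← Nat.cast_sum, hw_sum, div_self (by exact_mod_cast (hq j).ne')]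
  set ms : ℕ → T → ℝ := fun j x => m o * t.ratioProduct o (r j) x
  have hms_rec : ∀ j x, ms j x = r j x * ms j (t.pred x) := fun j x => by
    simp only [ms]
    rw [t.ratioProduct_eq_mul_pred (fun y => (hr_pos j y).ne')]
    ring
  refine ⟨ms, fun j => ⟨Flow.isFlowMeasure_of_eq_mul
    (fun x => mul_pos (hm.pos o) (t.ratioProduct_pos (hr_pos j) o x)) (hms_rec j) (hr_sum j),
    q j, hq j, fun x => ⟨w j x, hw j x, ?_⟩⟩, fun x => ?_⟩
  · rw [hms_rec j x, ← mul_assoc, mul_div_cancel₀ _ (by exact_mod_cast (hq j).ne')]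
  · rw [hm.eq_mul_ratioProduct o x]
    exact tendsto_const_nhds.mul
      (t.tendsto_ratioProduct (fun y => (hm.predRatio_pos y).ne') hw_lim o x)
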